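/- arXiv:1707.01750 — 4 statements merged into one kernel-verified Lean document; each statement's English description precedes it below -/
import Mathlib

section
/- Bound energy is subadditive under tensor products: for density matrices ρ_A, ρ_B on systems with Hamiltonians H_A, H_B, and the joint Hamiltonian H_A ⊗ I + I ⊗ H_B, one has B(ρ_A ⊗ ρ_B) ≤ B(ρ_A) + B(ρ_B). -/
/-!
Energy and entropy are both additive on product states `σA ⊗ₖ σB`: for the entropy, the spectrum
of a Kronecker product consists of the products `aᵢ bⱼ` of eigenvalues, and
`negMulLog (a * b) = b * negMulLog a + a * negMulLog b` sums to `S(σA) + S(σB)` because both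
spectra sum to one. So products of isentropic competitors for `ρA` and `ρB` are isentropic
competitors for `ρA ⊗ₖ ρB`, whose set of energies therefore contains the Minkowski sum of the two
sets of energies; the infimum of a Minkowski sum is the sum of the infima. Energies of density
matrices are bounded below (their entries have modulus at most one), so all these infima are
genuine rather than the junk value `sInf = 0` of an unbounded set.
-/

open Matrix BigOperators
open scoped ComplexOrder

noncomputable section

variable {n : Type*} [Fintype n] [DecidableEq n]

/-- A density matrix: positive semidefinite with unit trace. -/
def IsDensity (ρ : Matrix n n ℂ) : Prop := ρ.PosSemidef ∧ ρ.trace = 1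

/-- Von Neumann entropy via eigenvalues. -/
noncomputable def vnEntropy (ρ : Matrix n n ℂ) : ℝ :=
  if h : ρ.IsHermitian then ∑ i, Real.negMulLog (h.eigenvalues i) else 0

/-- Energy of a state with respect to a Hamiltonian. -/
noncomputable def energy (H ρ : Matrix n n ℂ) : ℝ := ((H * ρ).trace).re

/-- Gibbs state at inverse temperature β. -/
noncomputable def gibbs (H : Matrix n n ℂ) (β : ℝ) : Matrix n n ℂ :=
  ((NormedSpace.exp (-(β : ℂ) • H)).trace)⁻¹ • NormedSpace.exp (-(β : ℂ) • H)

/-- Bound energy: minimal energy among density matrices with the same entropy. -/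
noncomputable def boundEnergy (H ρ : Matrix n n ℂ) : ℝ :=
  sInf {e | ∃ σ : Matrix n n ℂ, IsDensity σ ∧ vnEntropy σ = vnEntropy ρ ∧ energy H σ = e}

/-- Free energy. -/
noncomputable def freeEnergy (H ρ : Matrix n n ℂ) : ℝ := energy H ρ - boundEnergy H ρ

/-- Matrix logarithm of a Hermitian matrix via spectral decomposition. -/
noncomputable def mlog (A : Matrix n n ℂ) : Matrix n n ℂ :=
  if h : A.IsHermitian then
    (h.eigenvectorUnitary : Matrix n n ℂ) *
      Matrix.diagonal (fun i => (Real.log (h.eigenvalues i) : ℂ)) *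
      star (h.eigenvectorUnitary : Matrix n n ℂ)
  else 0

/-- Quantum relative entropy D(ρ‖σ) = Tr(ρ log ρ - ρ log σ). -/
noncomputable def relEntropy (ρ σ : Matrix n n ℂ) : ℝ :=
  ((ρ * (mlog ρ - mlog σ)).trace).re

/-- Partial trace over the second factor. -/
noncomputable def margA {nA nB : Type*} [Fintype nA] [Fintype nB]
    (ρ : Matrix (nA × nB) (nA × nB) ℂ) : Matrix nA nA ℂ :=
  fun i i' => ∑ j, ρ (i, j) (i', j)

/-- Partial trace over the first factor. -/
noncomputable def margB {nA nB : Type*} [Fintype nA] [Fintype nB]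
    (ρ : Matrix (nA × nB) (nA × nB) ℂ) : Matrix nB nB ℂ :=
  fun j j' => ∑ i, ρ (i, j) (i, j')

open Kronecker Polynomial Finset Real Pointwise

section

variable {m p : Type*} [Fintype m] [Fintype p]

theorem Matrix.PosSemidef.norm_apply_le {A : Matrix m m ℂ} (hA : A.PosSemidef) (i j : m) :
    ‖A i j‖ ≤ ((A i i).re + (A j j).re) / 2 := by
  classical
  obtain ⟨B, rfl⟩ : ∃ B : Matrix m m ℂ, A = Bᴴ * B := by
    open scoped MatrixOrder Matrix.Norms.L2Operator in
    exact CStarAlgebra.nonneg_iff_eq_star_mul_self.mp hA.nonneg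
  simp only [mul_apply, conjTranspose_apply, Complex.re_sum]
  calc ‖∑ k, star (B k i) * B k j‖ ≤ ∑ k, ‖B k i‖ * ‖B k j‖ :=
        norm_sum_le_of_le _ fun k _ => by simp
    _ ≤ ∑ k, (‖B k i‖ ^ 2 + ‖B k j‖ ^ 2) / 2 :=
        sum_le_sum fun k _ => by nlinarith [sq_nonneg (‖B k i‖ - ‖B k j‖)]
    _ = _ := by simp [← sum_div, sum_add_distrib, Complex.conj_mul', ← Complex.ofReal_pow]

theorem IsDensity.norm_apply_le_one {ρ : Matrix m m ℂ} (hρ : IsDensity ρ) (i j : m) :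
    ‖ρ i j‖ ≤ 1 := by
  have hdiag : ∀ k, 0 ≤ (ρ k k).re := fun k => (Complex.nonneg_iff.mp hρ.1.diag_nonneg).1
  have hsum : ∑ k, (ρ k k).re = 1 := by
    simpa [trace, Complex.re_sum] using congrArg Complex.re hρ.2
  have hle : ∀ k, (ρ k k).re ≤ 1 := fun k =>
    hsum ▸ single_le_sum (fun k _ => hdiag k) (mem_univ k)
  linarith [hρ.1.norm_apply_le i j, hle i, hle j]

theorem IsDensity.neg_sum_norm_le_energy (H : Matrix m m ℂ) {ρ : Matrix m m ℂ}
    (hρ : IsDensity ρ) : -∑ i, ∑ j, ‖H i j‖ ≤ energy H ρ := by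
  have hnorm : ‖(H * ρ).trace‖ ≤ ∑ i, ∑ j, ‖H i j‖ :=
    norm_sum_le_of_le _ fun i _ => norm_sum_le_of_le _ fun j _ => by
      rw [norm_mul]
      exact mul_le_of_le_one_right (norm_nonneg _) (hρ.norm_apply_le_one j i)
  rw [energy]
  linarith [Complex.abs_re_le_norm (H * ρ).trace, neg_abs_le (H * ρ).trace.re]

theorem IsDensity.kronecker {ρ : Matrix m m ℂ} {σ : Matrix p p ℂ} (hρ : IsDensity ρ)
    (hσ : IsDensity σ) : IsDensity (ρ ⊗ₖ σ) :=
  ⟨hρ.1.kronecker hσ.1, by rw [trace_kronecker, hρ.2, hσ.2, mul_one]⟩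

variable [DecidableEq m] [DecidableEq p]

theorem energy_kronecker_add (HA : Matrix m m ℂ) (HB : Matrix p p ℂ) {σA : Matrix m m ℂ}
    {σB : Matrix p p ℂ} (hA : σA.trace = 1) (hB : σB.trace = 1) :
    energy (HA ⊗ₖ (1 : Matrix p p ℂ) + (1 : Matrix m m ℂ) ⊗ₖ HB) (σA ⊗ₖ σB)
      = energy HA σA + energy HB σB := by
  simp only [energy, add_mul, ← mul_kronecker_mul, trace_add, trace_kronecker, hA, hB, mul_one,
    one_mul, Complex.add_re]

theorem Matrix.IsHermitian.charpoly_kronecker {A : Matrix m m ℂ} {B : Matrix p p ℂ}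
    (hA : A.IsHermitian) (hB : B.IsHermitian) :
    (A ⊗ₖ B).charpoly
      = ∏ i : m × p, (X - C ((hA.eigenvalues i.1 * hB.eigenvalues i.2 : ℝ) : ℂ)) := by
  set U := (hA.eigenvectorUnitary : Matrix m m ℂ) ⊗ₖ (hB.eigenvectorUnitary : Matrix p p ℂ)
  have hU : star U * U = 1 :=
    (kronecker_mem_unitary hA.eigenvectorUnitary.2 hB.eigenvectorUnitary.2).1
  have hdiag : A ⊗ₖ B = U * diagonal
      (fun i : m × p => ((hA.eigenvalues i.1 * hB.eigenvalues i.2 : ℝ) : ℂ)) * star U := by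
    conv_lhs => rw [hA.spectral_theorem, hB.spectral_theorem]
    simp [Unitary.conjStarAlgAut_apply, mul_kronecker_mul, diagonal_kronecker_diagonal,
      star_eq_conjTranspose, conjTranspose_kronecker, U]
  rw [hdiag, charpoly_mul_comm, ← mul_assoc, hU, Matrix.one_mul, charpoly_diagonal]

theorem Matrix.IsHermitian.sum_eigenvalues_eq_one {A : Matrix m m ℂ} (hA : A.IsHermitian)
    (htr : A.trace = 1) : ∑ i, hA.eigenvalues i = 1 := by
  simpa [htr] using congrArg RCLike.re hA.trace_eq_sum_eigenvalues.symm

theorem vnEntropy_eq_sum_negMulLog_of_charpoly {M : Matrix m m ℂ} (hM : M.IsHermitian)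
    {d : m → ℝ} (h : M.charpoly = ∏ i, (X - C (d i : ℂ))) :
    vnEntropy M = ∑ i, negMulLog (d i) := by
  have hspec : univ.val.map hM.eigenvalues = univ.val.map d := by
    apply Multiset.map_injective Complex.ofReal_injective
    have := hM.roots_charpoly_eq_eigenvalues
    rw [h, roots_prod _ _ (prod_ne_zero_iff.mpr fun i _ => X_sub_C_ne_zero _)] at this
    simpa [Multiset.map_map] using this.symm
  rw [vnEntropy, dif_pos hM, sum_eq_multiset_sum, sum_eq_multiset_sum]
  simpa only [Multiset.map_map, Function.comp_def] using
    congrArg (fun s => (s.map negMulLog).sum) hspec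

theorem vnEntropy_kronecker {A : Matrix m m ℂ} {B : Matrix p p ℂ} (hA : A.IsHermitian)
    (hB : B.IsHermitian) (hAtr : A.trace = 1) (hBtr : B.trace = 1) :
    vnEntropy (A ⊗ₖ B) = vnEntropy A + vnEntropy B := by
  have hAB : (A ⊗ₖ B).IsHermitian := by
    rw [IsHermitian, conjTranspose_kronecker, hA.eq, hB.eq]
  rw [vnEntropy_eq_sum_negMulLog_of_charpoly hAB (hA.charpoly_kronecker hB), vnEntropy,
    dif_pos hA, vnEntropy, dif_pos hB, Fintype.sum_prod_type]
  simp only [negMulLog_mul, sum_add_distrib, ← sum_mul, ← mul_sum,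
    hA.sum_eigenvalues_eq_one hAtr, hB.sum_eigenvalues_eq_one hBtr, one_mul]

/-- `boundEnergy H ρ` is definitionally `sInf (isentropicEnergies H ρ)`. -/
def isentropicEnergies (H ρ : Matrix m m ℂ) : Set ℝ :=
  {e | ∃ σ : Matrix m m ℂ, IsDensity σ ∧ vnEntropy σ = vnEntropy ρ ∧ energy H σ = e}

theorem isentropicEnergies_nonempty (H : Matrix m m ℂ) {ρ : Matrix m m ℂ} (hρ : IsDensity ρ) :
    (isentropicEnergies H ρ).Nonempty :=
  ⟨energy H ρ, ρ, hρ, rfl, rfl⟩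

theorem bddBelow_isentropicEnergies (H ρ : Matrix m m ℂ) : BddBelow (isentropicEnergies H ρ) :=
  ⟨-∑ i, ∑ j, ‖H i j‖, by rintro _ ⟨σ, hσ, -, rfl⟩; exact hσ.neg_sum_norm_le_energy H⟩

theorem isentropicEnergies_add_subset (HA : Matrix m m ℂ) (HB : Matrix p p ℂ)
    {ρA : Matrix m m ℂ} {ρB : Matrix p p ℂ} (hρA : IsDensity ρA) (hρB : IsDensity ρB) :
    isentropicEnergies HA ρA + isentropicEnergies HB ρB
      ⊆ isentropicEnergies (HA ⊗ₖ (1 : Matrix p p ℂ) + (1 : Matrix m m ℂ) ⊗ₖ HB) (ρA ⊗ₖ ρB) := by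
  rintro _ ⟨_, ⟨σA, hσA, hSA, rfl⟩, _, ⟨σB, hσB, hSB, rfl⟩, rfl⟩
  refine ⟨σA ⊗ₖ σB, hσA.kronecker hσB, ?_, energy_kronecker_add HA HB hσA.2 hσB.2⟩
  rw [vnEntropy_kronecker hσA.1.1 hσB.1.1 hσA.2 hσB.2,
    vnEntropy_kronecker hρA.1.1 hρB.1.1 hρA.2 hρB.2, hSA, hSB]

end

open Kronecker in
theorem boundEnergy_subadditive_general {dA dB : ℕ}
    (HA : Matrix (Fin dA) (Fin dA) ℂ) (HB : Matrix (Fin dB) (Fin dB) ℂ)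
    (ρA : Matrix (Fin dA) (Fin dA) ℂ) (hρA : IsDensity ρA)
    (ρB : Matrix (Fin dB) (Fin dB) ℂ) (hρB : IsDensity ρB) :
    boundEnergy (HA ⊗ₖ (1 : Matrix (Fin dB) (Fin dB) ℂ)
        + (1 : Matrix (Fin dA) (Fin dA) ℂ) ⊗ₖ HB) (ρA ⊗ₖ ρB)
      ≤ boundEnergy HA ρA + boundEnergy HB ρB := by
  have hA := isentropicEnergies_nonempty HA hρA
  have hB := isentropicEnergies_nonempty HB hρB
  calc boundEnergy _ (ρA ⊗ₖ ρB)
      ≤ sInf (isentropicEnergies HA ρA + isentropicEnergies HB ρB) :=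
        csInf_le_csInf (bddBelow_isentropicEnergies _ _) (hA.add hB)
          (isentropicEnergies_add_subset HA HB hρA hρB)
    _ = boundEnergy HA ρA + boundEnergy HB ρB :=
        csInf_add hA (bddBelow_isentropicEnergies _ _) hB (bddBelow_isentropicEnergies _ _)

open Kronecker in
/-- Bound energy is subadditive under tensor products:
B(ρ_A ⊗ ρ_B) ≤ B(ρ_A) + B(ρ_B) for the non-interacting joint Hamiltonian. -/
theorem boundEnergy_subadditive {dA dB : ℕ}
    (HA : Matrix (Fin dA) (Fin dA) ℂ) (HB : Matrix (Fin dB) (Fin dB) ℂ)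
    (hA : HA.IsHermitian) (hB : HB.IsHermitian)
    (ρA : Matrix (Fin dA) (Fin dA) ℂ) (hρA : IsDensity ρA)
    (ρB : Matrix (Fin dB) (Fin dB) ℂ) (hρB : IsDensity ρB) :
    boundEnergy (HA ⊗ₖ (1 : Matrix (Fin dB) (Fin dB) ℂ)
        + (1 : Matrix (Fin dA) (Fin dA) ℂ) ⊗ₖ HB) (ρA ⊗ₖ ρB)
      ≤ boundEnergy HA ρA + boundEnergy HB ρB :=
  boundEnergy_subadditive_general HA HB ρA hρA ρB hρB
end
end

section
/- The free energy can be written in terms of relative entropy: for any density matrix ρ with Hamiltonian H, F(ρ) = T(ρ) · D(ρ ‖ γ(ρ)), where γ(ρ) is the Gibbs state with the same entropy as ρ, T(ρ) = 1/β(ρ) is its intrinsic temperature, and D is quantum relative entropy. -/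
/-!
Since `log γ = -β H - (log Z) 1` is affine in `H`, for every state `ρ` one has
`D(ρ ‖ γ) = β Tr(H ρ) - S(ρ) + log Z`. Applied to `γ` itself, where `D(γ ‖ γ) = 0`, this gives
`0 = β Tr(H γ) - S(γ) + log Z`; subtracting, the equal entropies and the `log Z` terms cancel.
-/

open Matrix BigOperators
open scoped ComplexOrder

noncomputable section

variable {n : Type*} [Fintype n] [DecidableEq n]

namespace Matrix.IsHermitian

variable {A : Matrix n n ℂ}

lemma trace_cfc (hA : A.IsHermitian) (f : ℝ → ℝ) :
    (cfc f A).trace = ∑ i, (f (hA.eigenvalues i) : ℂ) := by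
  rw [hA.cfc_eq, IsHermitian.cfc, Unitary.conjStarAlgAut_apply, trace_mul_cycle,
    Unitary.star_mul_self_of_mem hA.eigenvectorUnitary.2, one_mul, trace_diagonal]
  rfl

lemma mlog_eq_cfc (hA : A.IsHermitian) : mlog A = cfc Real.log A := by
  rw [hA.cfc_eq, IsHermitian.cfc, mlog, dif_pos hA]
  rfl

lemma re_trace_mul_mlog_self (hA : A.IsHermitian) :
    ((A * mlog A).trace).re = -vnEntropy A := by
  have hcont (f : ℝ → ℝ) : ContinuousOn f (spectrum ℝ A) := A.finite_real_spectrum.continuousOn f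
  have hmul : A * mlog A = cfc (fun x => -Real.negMulLog x) A := by
    rw [hA.mlog_eq_cfc]
    nth_rewrite 1 [← cfc_id' ℝ A]
    rw [← cfc_mul _ _ A (hcont _) (hcont _)]
    simp only [Real.negMulLog, neg_mul, neg_neg]
  rw [hmul, hA.trace_cfc, vnEntropy, dif_pos hA, Complex.re_sum, ← Finset.sum_neg_distrib]
  simp only [Complex.ofReal_re]

/- `NormedSpace.exp` needs only the topology of matrices, whereas the CFC lemma is stated for
normed algebras: any matrix norm inducing the product topology will do. -/
lemma exp_ofReal_smul (hA : A.IsHermitian) (t : ℝ) :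
    NormedSpace.exp ((t : ℂ) • A) = cfc (fun x => Real.exp (t * x)) A := by
  have htA : IsSelfAdjoint ((t : ℂ) • A) := by
    rw [Complex.coe_smul]; exact (IsSelfAdjoint.all t).smul hA.isSelfAdjoint
  have hexp : cfc Real.exp ((t : ℂ) • A) = NormedSpace.exp ((t : ℂ) • A) :=
    @CFC.real_exp_eq_normedSpace_exp _ Matrix.linftyOpNormedRing _ Matrix.linftyOpNormedAlgebra
      instContinuousFunctionalCalculus _ htA
  rw [← hexp, Complex.coe_smul, ← cfc_comp_smul t Real.exp A]
  rfl

lemma exp_neg_smul (hA : A.IsHermitian) (β : ℝ) :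
    NormedSpace.exp (-(β : ℂ) • A) = cfc (fun x => Real.exp (-(β * x))) A := by
  simpa only [Complex.ofReal_neg, neg_mul] using hA.exp_ofReal_smul (-β)

end Matrix.IsHermitian

def partitionFunction (H : Matrix n n ℂ) (β : ℝ) : ℝ :=
  ((NormedSpace.exp (-(β : ℂ) • H)).trace).re

lemma relEntropy_self (ρ : Matrix n n ℂ) : relEntropy ρ ρ = 0 := by
  rw [relEntropy, sub_self, mul_zero, trace_zero, Complex.zero_re]

section Gibbs

variable {H : Matrix n n ℂ}

lemma partitionFunction_eq_sum (hH : H.IsHermitian) (β : ℝ) :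
    partitionFunction H β = ∑ i, Real.exp (-(β * hH.eigenvalues i)) := by
  rw [partitionFunction, hH.exp_neg_smul, hH.trace_cfc, Complex.re_sum]
  simp only [Complex.ofReal_re]

lemma partitionFunction_pos [Nonempty n] (hH : H.IsHermitian) (β : ℝ) :
    0 < partitionFunction H β := by
  rw [partitionFunction_eq_sum hH]
  exact Finset.sum_pos (fun i _ => Real.exp_pos _) Finset.univ_nonempty

lemma gibbs_eq_cfc (hH : H.IsHermitian) (β : ℝ) :
    gibbs H β = cfc (fun x => Real.exp (-(β * x)) / partitionFunction H β) H := by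
  have htrace : (NormedSpace.exp (-(β : ℂ) • H)).trace = partitionFunction H β := by
    rw [partitionFunction_eq_sum hH, hH.exp_neg_smul, hH.trace_cfc, Complex.ofReal_sum]
  simp only [div_eq_inv_mul]
  rw [gibbs, htrace, cfc_const_mul _ _ H, ← hH.exp_neg_smul, ← Complex.ofReal_inv,
    Complex.coe_smul]

lemma isHermitian_gibbs (hH : H.IsHermitian) (β : ℝ) : (gibbs H β).IsHermitian := by
  rw [gibbs_eq_cfc hH]
  exact cfc_predicate _ H

lemma trace_gibbs [Nonempty n] (hH : H.IsHermitian) (β : ℝ) : (gibbs H β).trace = 1 := by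
  rw [gibbs_eq_cfc hH, hH.trace_cfc, ← Complex.ofReal_sum, ← Finset.sum_div,
    ← partitionFunction_eq_sum hH, div_self (partitionFunction_pos hH β).ne', Complex.ofReal_one]

lemma mlog_gibbs [Nonempty n] (hH : H.IsHermitian) (β : ℝ) :
    mlog (gibbs H β) = (-β) • H - Real.log (partitionFunction H β) • 1 := by
  have hlog : (Real.log ∘ fun x => Real.exp (-(β * x)) / partitionFunction H β) =
      fun x => -β * x - Real.log (partitionFunction H β) := by
    funext x
    rw [Function.comp_apply, Real.log_div (Real.exp_ne_zero _) (partitionFunction_pos hH β).ne',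
      Real.log_exp, neg_mul]
  have hfin := H.finite_real_spectrum
  rw [(isHermitian_gibbs hH β).mlog_eq_cfc, gibbs_eq_cfc hH,
    ← cfc_comp _ _ H hH.isSelfAdjoint ((hfin.image _).continuousOn _) (hfin.continuousOn _), hlog,
    cfc_sub _ _ H (hfin.continuousOn _) (hfin.continuousOn _),
    cfc_const_mul_id _ H hH.isSelfAdjoint, cfc_const _ H hH.isSelfAdjoint,
    Algebra.algebraMap_eq_smul_one]

lemma relEntropy_gibbs [Nonempty n] (hH : H.IsHermitian) (β : ℝ) {ρ : Matrix n n ℂ}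
    (hρ : ρ.IsHermitian) (hρ_trace : ρ.trace = 1) :
    relEntropy ρ (gibbs H β) =
      β * energy H ρ - vnEntropy ρ + Real.log (partitionFunction H β) := by
  rw [relEntropy, mul_sub, trace_sub, Complex.sub_re, hρ.re_trace_mul_mlog_self, mlog_gibbs hH,
    mul_sub, trace_sub, mul_smul_comm, mul_smul_comm, trace_smul, trace_smul, mul_one, hρ_trace,
    trace_mul_comm, energy]
  simp only [Complex.sub_re, Complex.smul_re, Complex.one_re]
  ring

end Gibbs

open Kronecker in
theorem freeEnergy_eq_temp_mul_relEntropy_general {d : ℕ} (H : Matrix (Fin d) (Fin d) ℂ)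
    (hH : H.IsHermitian) (ρ : Matrix (Fin d) (Fin d) ℂ) (hρ : IsDensity ρ)
    (β : ℝ) (hβpos : 0 < β) (hβ : vnEntropy (gibbs H β) = vnEntropy ρ) :
    energy H ρ - energy H (gibbs H β) = (1 / β) * relEntropy ρ (gibbs H β) := by
  rcases isEmpty_or_nonempty (Fin d) with _ | _
  · simp [energy, relEntropy, Matrix.trace]
  have hρ_rel := relEntropy_gibbs hH β hρ.1.1 hρ.2
  have hγ_rel := relEntropy_gibbs hH β (isHermitian_gibbs hH β) (trace_gibbs hH β)
  rw [relEntropy_self, hβ] at hγ_rel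
  rw [hρ_rel]
  field_simp [hβpos.ne']
  linarith

open Kronecker in
/-- Free energy in terms of relative entropy:
F(ρ) = T(ρ) · D(ρ‖γ(ρ)) with T(ρ) = 1/β(ρ) the intrinsic temperature. -/
theorem freeEnergy_eq_temp_mul_relEntropy {d : ℕ} (H : Matrix (Fin d) (Fin d) ℂ)
    (hH : H.IsHermitian) (ρ : Matrix (Fin d) (Fin d) ℂ) (hρ : IsDensity ρ)
    (h0 : 0 < vnEntropy ρ) (h1 : vnEntropy ρ < Real.log d)
    (β : ℝ) (hβpos : 0 < β) (hβ : vnEntropy (gibbs H β) = vnEntropy ρ) :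
    energy H ρ - energy H (gibbs H β) = (1 / β) * relEntropy ρ (gibbs H β) :=
  freeEnergy_eq_temp_mul_relEntropy_general H hH ρ hρ β hβpos hβ

end
end

section
/- The intrinsic equilibration temperature is lower than the spontaneous equilibration temperature: for a non-thermal state ρ (with H non-degenerate and 0 < S(ρ) < log d), let β(ρ) be defined by S(γ(β(ρ))) = S(ρ) and β̃(ρ) by E(γ(β̃(ρ))) = E(ρ). Then β(ρ) > β̃(ρ), i.e., T(ρ) < T̃(ρ). -/
open Matrix BigOperators
open scoped ComplexOrder

noncomputable section

variable {n : Type*} [Fintype n] [DecidableEq n]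

/-! Suppose `β ≤ β̃`. The Gibbs energy `β ↦ E(γ(β))` is antitone, so
`E(ρ) = E(γ(β̃)) ≤ E(γ(β))`. On the other hand `γ(β)` is the unique maximiser of `S - β E` over
density matrices (the Gibbs variational principle): in eigenbases `vᵢ` of `ρ` and `uⱼ` of `H`
the overlaps `|⟨vᵢ, uⱼ⟩|²` form a doubly stochastic matrix, which reduces the claim to the
scalar inequality `x - r ≤ x log x - x log r`, strict unless `x = r`; equality throughout would
force `ρ` and `γ(β)` to have the same spectral decomposition. Since `ρ ≠ γ(β)` and
`S(ρ) = S(γ(β))`, this gives `β E(γ(β)) < β E(ρ)`, contradicting `β > 0`. -/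

theorem Real.sub_lt_mul_log_sub_mul_log {x r : ℝ} (hx : 0 ≤ x) (hr : 0 < r) (hxr : x ≠ r) :
    x - r < x * Real.log x - x * Real.log r := by
  rcases hx.eq_or_lt with rfl | hx
  · simpa using hr
  have hlog : Real.log (r / x) < r / x - 1 :=
    Real.log_lt_sub_one_of_pos (div_pos hr hx) (by rwa [ne_eq, div_eq_one_iff_eq hx.ne', eq_comm])
  rw [Real.log_div hr.ne' hx.ne'] at hlog
  have hxr' : x * (r / x - 1) = r - x := by field_simp
  nlinarith [mul_lt_mul_of_pos_left hlog hx]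

theorem Real.sub_le_mul_log_sub_mul_log {x r : ℝ} (hx : 0 ≤ x) (hr : 0 < r) :
    x - r ≤ x * Real.log x - x * Real.log r := by
  rcases eq_or_ne x r with rfl | hxr
  · simp
  · exact (Real.sub_lt_mul_log_sub_mul_log hx hr hxr).le

theorem Real.sum_exp_pos {ι : Type*} [Fintype ι] [Nonempty ι] (f : ι → ℝ) :
    0 < ∑ j, Real.exp (f j) :=
  Finset.sum_pos (fun _ _ => Real.exp_pos _) Finset.univ_nonempty

theorem Real.mul_sub_mul_exp_sub_exp_nonneg {β β' : ℝ} (hβ : β ≤ β') (x y : ℝ) :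
    0 ≤ (x - y) *
      (Real.exp (-β * x) * Real.exp (-β' * y) - Real.exp (-β' * x) * Real.exp (-β * y)) := by
  simp only [← Real.exp_add]
  rcases le_total y x with hxy | hxy
  · exact mul_nonneg (sub_nonneg.2 hxy) (sub_nonneg.2 (Real.exp_le_exp.2 (by nlinarith)))
  · exact mul_nonneg_of_nonpos_of_nonpos (sub_nonpos.2 hxy)
      (sub_nonpos.2 (Real.exp_le_exp.2 (by nlinarith)))

section ProbabilityVectors

variable {ι : Type*} [Fintype ι]

theorem sum_sum_mul_log_lt_of_mem_doublyStochastic [DecidableEq ι] {p q : ι → ℝ}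
    {c : Matrix ι ι ℝ} (hc : c ∈ doublyStochastic ℝ ι) (hp : ∀ i, 0 ≤ p i) (hq : ∀ j, 0 < q j)
    (hpq : ∑ i, p i = ∑ j, q j) (hne : ∃ i j, c i j ≠ 0 ∧ p i ≠ q j) :
    ∑ i, ∑ j, c i j * (p i * Real.log (q j)) < ∑ i, p i * Real.log (p i) := by
  obtain ⟨i₀, j₀, hc₀, hpq₀⟩ := hne
  have hrow := sum_row_of_mem_doublyStochastic hc
  have hcol := sum_col_of_mem_doublyStochastic hc
  have hterm : ∀ i j, c i j * (p i - q j) ≤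
      c i j * (p i * Real.log (p i) - p i * Real.log (q j)) := fun i j =>
    mul_le_mul_of_nonneg_left (Real.sub_le_mul_log_sub_mul_log (hp i) (hq j))
      (nonneg_of_mem_doublyStochastic hc)
  have hlt : ∑ i, ∑ j, c i j * (p i - q j) <
      ∑ i, ∑ j, c i j * (p i * Real.log (p i) - p i * Real.log (q j)) :=
    Finset.sum_lt_sum (fun i _ => Finset.sum_le_sum fun j _ => hterm i j)
      ⟨i₀, Finset.mem_univ _, Finset.sum_lt_sum (fun j _ => hterm i₀ j)
        ⟨j₀, Finset.mem_univ _, mul_lt_mul_of_pos_left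
          (Real.sub_lt_mul_log_sub_mul_log (hp i₀) (hq j₀) hpq₀)
          ((nonneg_of_mem_doublyStochastic hc).lt_of_ne' hc₀)⟩⟩
  have hmass : ∑ i, ∑ j, c i j * (p i - q j) = 0 := by
    simp only [mul_sub, Finset.sum_sub_distrib]
    rw [Finset.sum_comm (f := fun i j => c i j * q j)]
    simp only [← Finset.sum_mul, hrow, hcol, one_mul, hpq, sub_self]
  have hentropy : ∑ i, ∑ j, c i j * (p i * Real.log (p i) - p i * Real.log (q j)) =
      ∑ i, p i * Real.log (p i) - ∑ i, ∑ j, c i j * (p i * Real.log (q j)) := by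
    simp only [mul_sub, Finset.sum_sub_distrib, ← Finset.sum_mul, hrow, one_mul]
  linarith

def gibbsDist (μ : ι → ℝ) (β : ℝ) (i : ι) : ℝ :=
  Real.exp (-β * μ i) / ∑ j, Real.exp (-β * μ j)

theorem gibbsDist_pos [Nonempty ι] (μ : ι → ℝ) (β : ℝ) (i : ι) : 0 < gibbsDist μ β i :=
  div_pos (Real.exp_pos _) (Real.sum_exp_pos _)

theorem sum_gibbsDist [Nonempty ι] (μ : ι → ℝ) (β : ℝ) : ∑ i, gibbsDist μ β i = 1 := by
  simp only [gibbsDist, ← Finset.sum_div, div_self (Real.sum_exp_pos _).ne']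

theorem log_gibbsDist [Nonempty ι] (μ : ι → ℝ) (β : ℝ) (i : ι) :
    Real.log (gibbsDist μ β i) = -β * μ i - Real.log (∑ j, Real.exp (-β * μ j)) := by
  rw [gibbsDist, Real.log_div (Real.exp_ne_zero _) (Real.sum_exp_pos _).ne', Real.log_exp]

theorem antitone_sum_mul_gibbsDist (μ : ι → ℝ) :
    Antitone fun β => ∑ i, μ i * gibbsDist μ β i := by
  rcases isEmpty_or_nonempty ι with _ | _
  · intro _ _ _
    simp
  intro β β' hβ
  simp only [gibbsDist, ← mul_div_assoc, ← Finset.sum_div]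
  rw [div_le_div_iff₀ (Real.sum_exp_pos _) (Real.sum_exp_pos _), Finset.sum_mul_sum,
    Finset.sum_mul_sum, ← sub_nonneg]
  set g : ι → ι → ℝ := fun i j =>
    μ i * Real.exp (-β * μ i) * Real.exp (-β' * μ j) -
      μ i * Real.exp (-β' * μ i) * Real.exp (-β * μ j)
  have hpair : 0 ≤ ∑ i, ∑ j, (g i j + g j i) := by
    refine Finset.sum_nonneg fun i _ => Finset.sum_nonneg fun j _ => ?_
    refine (Real.mul_sub_mul_exp_sub_exp_nonneg hβ (μ i) (μ j)).trans_eq ?_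
    ring
  have hsymm : ∑ i, ∑ j, g j i = ∑ i, ∑ j, g i j := Finset.sum_comm
  simp only [Finset.sum_add_distrib, hsymm] at hpair
  simp only [g, Finset.sum_sub_distrib] at hpair
  linarith

theorem sum_sum_mul_log_gibbsDist [Nonempty ι] {p : ι → ℝ}
    {c : ι → ι → ℝ} (hrow : ∀ i, ∑ j, c i j = 1) (hp : ∑ i, p i = 1) (μ : ι → ℝ) (β : ℝ) :
    ∑ i, ∑ j, c i j * (p i * Real.log (gibbsDist μ β j)) =
      -β * ∑ i, ∑ j, c i j * (p i * μ j) - Real.log (∑ j, Real.exp (-β * μ j)) := by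
  have hterm (i j : ι) : c i j * (p i * Real.log (gibbsDist μ β j)) =
      -β * (c i j * (p i * μ j)) - Real.log (∑ j, Real.exp (-β * μ j)) * p i * c i j := by
    rw [log_gibbsDist]
    ring
  simp only [hterm, Finset.sum_sub_distrib, ← Finset.mul_sum, hrow, mul_one, hp]

end ProbabilityVectors

namespace Matrix

theorem map_normSq_mem_doublyStochastic {W : Matrix n n ℂ} (hW : W ∈ unitaryGroup n ℂ) :
    W.map Complex.normSq ∈ doublyStochastic ℝ n := by
  have hrow (i : n) : ∑ j, (Complex.normSq (W i j) : ℂ) = 1 := by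
    have h : (W * star W) i i = 1 := by rw [Unitary.mul_star_self_of_mem hW, one_apply_eq]
    simpa [mul_apply, Complex.mul_conj] using h
  have hcol (j : n) : ∑ i, (Complex.normSq (W i j) : ℂ) = 1 := by
    have h : (star W * W) j j = 1 := by rw [Unitary.star_mul_self_of_mem hW, one_apply_eq]
    simpa [mul_apply, Complex.conj_mul', Complex.normSq_eq_norm_sq] using h
  exact mem_doublyStochastic_iff_sum.2
    ⟨fun i j => Complex.normSq_nonneg _, fun i => by exact_mod_cast hrow i,
      fun j => by exact_mod_cast hcol j⟩

theorem diagonal_mul_eq_mul_diagonal_iff {R : Type*} [CommRing R] [NoZeroDivisors R]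
    {a b : n → R} {W : Matrix n n R} :
    diagonal a * W = W * diagonal b ↔ ∀ i j, W i j ≠ 0 → a i = b j := by
  simp only [← Matrix.ext_iff, diagonal_mul, mul_diagonal, mul_comm (W _ _),
    mul_eq_mul_right_iff, or_iff_not_imp_right]

end Matrix

theorem Unitary.conj_eq_conj_of_mul_eq_mul {R : Type*} [Monoid R] [StarMul R]
    {U V : unitary R} {a b : R} (h : a * (star V * U) = star V * U * b) :
    V * a * star V = U * b * star U :=
  calc (V : R) * a * star V = V * (a * (star V * U)) * star U := by
        simp [mul_assoc]
    _ = V * (star V * U * b) * star U := by rw [h]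
    _ = U * b * star U := by simp [← mul_assoc]

theorem Matrix.IsHermitian.sum_comp_eigenvalues_eq {𝕜 : Type*} [RCLike 𝕜] {A : Matrix n n 𝕜}
    (hA : A.IsHermitian) {U : unitaryGroup n 𝕜} {v : n → ℝ}
    (hAv : A = (U : Matrix n n 𝕜) * diagonal (RCLike.ofReal ∘ v) * star (U : Matrix n n 𝕜))
    (f : ℝ → ℝ) :
    ∑ i, f (hA.eigenvalues i) = ∑ i, f (v i) := by
  have hroots : Multiset.map (RCLike.ofReal ∘ hA.eigenvalues) Finset.univ.val =
      Multiset.map (RCLike.ofReal ∘ v : n → 𝕜) Finset.univ.val := by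
    rw [← hA.roots_charpoly_eq_eigenvalues, hAv, charpoly_mul_comm, ← mul_assoc,
      Unitary.coe_star_mul_self, one_mul, charpoly_diagonal, Polynomial.roots_prod]
    · simp
    · simp [Finset.prod_ne_zero_iff, Polynomial.X_sub_C_ne_zero]
  have := congrArg (fun m => (m.map (f ∘ RCLike.re)).sum) hroots
  simp only [Multiset.map_map, Function.comp_def, RCLike.ofReal_re] at this
  exact this

theorem Matrix.exp_unitary_conj {𝕜 : Type*} [RCLike 𝕜] (U : unitaryGroup n 𝕜)
    (A : Matrix n n 𝕜) :
    NormedSpace.exp ((U : Matrix n n 𝕜) * A * star (U : Matrix n n 𝕜)) =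
      U * NormedSpace.exp A * star (U : Matrix n n 𝕜) :=
  Matrix.exp_units_conj (Unitary.toUnits U) A

theorem Matrix.trace_unitary_conj {𝕜 : Type*} [RCLike 𝕜] (U : unitaryGroup n 𝕜)
    (A : Matrix n n 𝕜) : ((U : Matrix n n 𝕜) * A * star (U : Matrix n n 𝕜)).trace = A.trace := by
  rw [trace_mul_comm, ← mul_assoc, Unitary.coe_star_mul_self, one_mul]

theorem Matrix.IsHermitian.eq_unitary_conj_diagonal {H : Matrix n n ℂ} (hH : H.IsHermitian) :
    H = (hH.eigenvectorUnitary : Matrix n n ℂ) * diagonal (fun i => (hH.eigenvalues i : ℂ)) *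
      star (hH.eigenvectorUnitary : Matrix n n ℂ) := by
  simpa [Function.comp_def] using hH.spectral_theorem

theorem gibbs_eq {H : Matrix n n ℂ} (hH : H.IsHermitian) (β : ℝ) :
    gibbs H β = (hH.eigenvectorUnitary : Matrix n n ℂ) *
      diagonal (fun i => (gibbsDist hH.eigenvalues β i : ℂ)) *
      star (hH.eigenvectorUnitary : Matrix n n ℂ) := by
  set U := hH.eigenvectorUnitary
  set μ := hH.eigenvalues
  have hexp : NormedSpace.exp (-(β : ℂ) • H) =
      U * diagonal (fun i => (Real.exp (-β * μ i) : ℂ)) * star (U : Matrix n n ℂ) := by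
    have hsmul : -(β : ℂ) • H =
        U * diagonal (fun i => ((-β * μ i : ℝ) : ℂ)) * star (U : Matrix n n ℂ) := by
      rw [hH.eq_unitary_conj_diagonal, ← smul_mul_assoc, ← mul_smul_comm, ← diagonal_smul]
      congr 3
      ext i
      simp [μ]
    rw [hsmul, exp_unitary_conj, exp_diagonal]
    congr 3
    ext i
    simp [Complex.ofReal_exp, ← Complex.exp_eq_exp_ℂ]
  rw [gibbs, hexp, trace_unitary_conj, trace_diagonal, ← smul_mul_assoc, ← mul_smul_comm,
    ← diagonal_smul]
  congr 3
  ext i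
  simp [gibbsDist, div_eq_inv_mul]

theorem energy_eq_sum_normSq {H ρ : Matrix n n ℂ} {U V : unitaryGroup n ℂ} {μ p : n → ℝ}
    (hH : H = U * diagonal (fun j => (μ j : ℂ)) * star (U : Matrix n n ℂ))
    (hρ : ρ = V * diagonal (fun i => (p i : ℂ)) * star (V : Matrix n n ℂ)) :
    energy H ρ =
      ∑ i, ∑ j, (star (V : Matrix n n ℂ) * U).map Complex.normSq i j * (p i * μ j) := by
  subst hH hρ
  set W := star (V : Matrix n n ℂ) * U
  have htrace : ((U : Matrix n n ℂ) * diagonal (fun j => (μ j : ℂ)) * star (U : Matrix n n ℂ) *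
      (V * diagonal (fun i => (p i : ℂ)) * star (V : Matrix n n ℂ))).trace =
      (diagonal (fun j => (μ j : ℂ)) * star W * diagonal (fun i => (p i : ℂ)) * W).trace := by
    simp only [W, star_mul, star_star, mul_assoc]
    rw [trace_mul_comm]
    simp only [mul_assoc]
  have hdiag (j : n) : (diagonal (fun j => (μ j : ℂ)) * star W * diagonal (fun i => (p i : ℂ)) *
      W) j j = ∑ i, ((Complex.normSq (W i j) * (p i * μ j) : ℝ) : ℂ) := by
    rw [mul_apply]
    simp only [mul_diagonal, diagonal_mul, star_apply]
    refine Finset.sum_congr rfl fun i _ => ?_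
    push_cast
    rw [Complex.normSq_eq_conj_mul_self, starRingEnd_apply]
    ring
  rw [energy, htrace, trace, Finset.sum_comm]
  simp only [diag, hdiag, Complex.re_sum, Complex.ofReal_re, map_apply]

theorem vnEntropy_unitary_conj_diagonal (U : unitaryGroup n ℂ) (v : n → ℝ) :
    vnEntropy ((U : Matrix n n ℂ) * diagonal (fun i => (v i : ℂ)) * star (U : Matrix n n ℂ)) =
      ∑ i, Real.negMulLog (v i) := by
  have hA : ((U : Matrix n n ℂ) * diagonal (fun i => (v i : ℂ)) *
      star (U : Matrix n n ℂ)).IsHermitian :=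
    isHermitian_mul_mul_conjTranspose _ (isHermitian_diagonal_of_self_adjoint _ (by
      ext i; simp))
  rw [vnEntropy, dif_pos hA]
  exact hA.sum_comp_eigenvalues_eq rfl _

theorem energy_gibbs {H : Matrix n n ℂ} (hH : H.IsHermitian) (β : ℝ) :
    energy H (gibbs H β) = ∑ i, gibbsDist hH.eigenvalues β i * hH.eigenvalues i := by
  rw [energy_eq_sum_normSq hH.eq_unitary_conj_diagonal (gibbs_eq hH β),
    Unitary.coe_star_mul_self]
  simp [one_apply, apply_ite]

theorem energy_gibbs_antitone {H : Matrix n n ℂ} (hH : H.IsHermitian) :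
    Antitone fun β => energy H (gibbs H β) := by
  simpa only [energy_gibbs hH, mul_comm (gibbsDist _ _ _)] using
    antitone_sum_mul_gibbsDist hH.eigenvalues

theorem vnEntropy_gibbs_sub_mul_energy_gibbs [Nonempty n] {H : Matrix n n ℂ}
    (hH : H.IsHermitian) (β : ℝ) :
    vnEntropy (gibbs H β) - β * energy H (gibbs H β) =
      Real.log (∑ j, Real.exp (-β * hH.eigenvalues j)) := by
  have hterm (i : n) : Real.negMulLog (gibbsDist hH.eigenvalues β i) =
      β * (gibbsDist hH.eigenvalues β i * hH.eigenvalues i) +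
        Real.log (∑ j, Real.exp (-β * hH.eigenvalues j)) * gibbsDist hH.eigenvalues β i := by
    rw [Real.negMulLog, log_gibbsDist]
    ring
  rw [energy_gibbs hH, gibbs_eq hH, vnEntropy_unitary_conj_diagonal]
  simp only [hterm, Finset.sum_add_distrib, ← Finset.mul_sum, sum_gibbsDist]
  ring

theorem IsDensity.nonempty {m : Type*} [Fintype m] {ρ : Matrix m m ℂ} (hρ : IsDensity ρ) :
    Nonempty m := by
  obtain ⟨i, -, -⟩ := Finset.exists_ne_zero_of_sum_ne_zero (hρ.2.trans_ne one_ne_zero)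
  exact ⟨i⟩

theorem vnEntropy_sub_mul_energy_lt_of_ne_gibbs {H ρ : Matrix n n ℂ} (hH : H.IsHermitian)
    (hρ : IsDensity ρ) {β : ℝ} (hne : ρ ≠ gibbs H β) :
    vnEntropy ρ - β * energy H ρ < vnEntropy (gibbs H β) - β * energy H (gibbs H β) := by
  have := hρ.nonempty
  set μ := hH.eigenvalues
  set p := hρ.1.1.eigenvalues
  set W := star (hρ.1.1.eigenvectorUnitary : Matrix n n ℂ) * hH.eigenvectorUnitary
  have hW : W.map Complex.normSq ∈ doublyStochastic ℝ n :=
    map_normSq_mem_doublyStochastic (star hρ.1.1.eigenvectorUnitary * hH.eigenvectorUnitary).2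
  have hp : ∑ i, p i = 1 := by
    simpa [p] using congrArg RCLike.re (hρ.1.1.trace_eq_sum_eigenvalues.symm.trans hρ.2)
  have hoverlap : ∃ i j, W.map Complex.normSq i j ≠ 0 ∧ p i ≠ gibbsDist μ β j := by
    by_contra! h
    refine hne ?_
    rw [hρ.1.1.eq_unitary_conj_diagonal, gibbs_eq hH]
    refine Unitary.conj_eq_conj_of_mul_eq_mul (diagonal_mul_eq_mul_diagonal_iff.2 ?_)
    intro i j hij
    exact congrArg _ (h i j (by simpa using hij))
  have hklein := sum_sum_mul_log_lt_of_mem_doublyStochastic hW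
    (fun i => hρ.1.eigenvalues_nonneg i) (gibbsDist_pos μ β) (by rw [hp, sum_gibbsDist]) hoverlap
  rw [sum_sum_mul_log_gibbsDist (sum_row_of_mem_doublyStochastic hW) hp,
    ← energy_eq_sum_normSq hH.eq_unitary_conj_diagonal hρ.1.1.eq_unitary_conj_diagonal] at hklein
  have hentropy : vnEntropy ρ = -∑ i, p i * Real.log (p i) := by
    simp [vnEntropy, hρ.1.1, Real.negMulLog, p]
  rw [vnEntropy_gibbs_sub_mul_energy_gibbs hH, hentropy]
  linarith

open Kronecker in
theorem intrinsic_beta_gt_spontaneous_beta_general {d : ℕ} (H : Matrix (Fin d) (Fin d) ℂ)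
    (hH : H.IsHermitian)
    (ρ : Matrix (Fin d) (Fin d) ℂ) (hρ : IsDensity ρ)
    (hnontherm : ∀ β : ℝ, ρ ≠ gibbs H β)
    (β βt : ℝ) (hβpos : 0 < β)
    (hβ : vnEntropy (gibbs H β) = vnEntropy ρ)
    (hβt : energy H (gibbs H βt) = energy H ρ) :
    βt < β := by
  by_contra! hle
  have hcooler : energy H ρ ≤ energy H (gibbs H β) := hβt ▸ energy_gibbs_antitone hH hle
  have hvar := vnEntropy_sub_mul_energy_lt_of_ne_gibbs hH hρ (hnontherm β)
  rw [hβ] at hvar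
  have hscaled := mul_le_mul_of_nonneg_left hcooler hβpos.le
  linarith

open Kronecker in
/-- For a non-thermal state ρ, the intrinsic inverse temperature β(ρ)
(defined by matching entropy) is strictly larger than the spontaneous equilibration
inverse temperature β̃(ρ) (defined by matching energy). -/
theorem intrinsic_beta_gt_spontaneous_beta {d : ℕ} (H : Matrix (Fin d) (Fin d) ℂ)
    (hH : H.IsHermitian) (hnd : ∃ i j, hH.eigenvalues i ≠ hH.eigenvalues j)
    (ρ : Matrix (Fin d) (Fin d) ℂ) (hρ : IsDensity ρ)
    (hnontherm : ∀ β : ℝ, ρ ≠ gibbs H β)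
    (h0 : 0 < vnEntropy ρ) (h1 : vnEntropy ρ < Real.log d)
    (β βt : ℝ) (hβpos : 0 < β) (hβtpos : 0 < βt)
    (hβ : vnEntropy (gibbs H β) = vnEntropy ρ)
    (hβt : energy H (gibbs H βt) = energy H ρ) :
    βt < β :=
  intrinsic_beta_gt_spontaneous_beta_general H hH ρ hρ hnontherm β βt hβpos hβ hβt
end
end

section
/- Work extraction with a thermal bath: for a state ρ_A ⊗ γ_B(β) on a bipartite system with non-interacting Hamiltonian, any entropy preserving transformation extracts work at most W ≤ F_β(ρ_A) - F_β(γ_A(β)), where F_β(σ) = E(σ) - β^{-1}S(σ) and γ_A(β), γ_B(β) are the Gibbs states of H_A, H_B at inverse temperature β. -/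
open Matrix BigOperators
open scoped ComplexOrder

noncomputable section

variable {n : Type*} [Fintype n] [DecidableEq n]

/-!
With `F_β(σ) = E(σ) - β⁻¹ S(σ)`, the Gibbs state minimises `F_β` among density matrices (Klein's
inequality): in the eigenbasis of `H` the populations of `σ` are the image of its spectrum under a
doubly stochastic matrix, so by concavity of `x ↦ -x log x` their Shannon entropy is at least
`S(σ)`, and Gibbs' inequality bounds that Shannon entropy by `β E(σ) + log Z`.

Since `ρ'` has the entropy of `ρ_A ⊗ γ_B`, the extracted work is
`F_β(ρ_A ⊗ γ_B) - F_β(ρ') ≤ F_β(ρ_A ⊗ γ_B) - F_β(γ_A ⊗ γ_B)`, because the Gibbs state of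
`H_A ⊗ 1 + 1 ⊗ H_B` is `γ_A ⊗ γ_B`. Additivity of `F_β` on product states cancels the bath term.
-/

open Real

section Classical

variable {m : Type*} [Fintype m]

def partitionFn (e : m → ℝ) (β : ℝ) : ℝ := ∑ i, exp (-β * e i)

def boltzmann (e : m → ℝ) (β : ℝ) (i : m) : ℝ := exp (-β * e i) / partitionFn e β

lemma partitionFn_pos [Nonempty m] (e : m → ℝ) (β : ℝ) : 0 < partitionFn e β :=
  Finset.sum_pos (fun _ _ => exp_pos _) Finset.univ_nonempty

lemma boltzmann_nonneg (e : m → ℝ) (β : ℝ) (i : m) : 0 ≤ boltzmann e β i :=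
  div_nonneg (exp_pos _).le (Finset.sum_nonneg fun _ _ => (exp_pos _).le)

lemma boltzmann_pos [Nonempty m] (e : m → ℝ) (β : ℝ) (i : m) : 0 < boltzmann e β i :=
  div_pos (exp_pos _) (partitionFn_pos e β)

lemma sum_boltzmann [Nonempty m] (e : m → ℝ) (β : ℝ) : ∑ i, boltzmann e β i = 1 := by
  simp only [boltzmann, ← Finset.sum_div]
  exact div_self (partitionFn_pos e β).ne'

lemma log_boltzmann [Nonempty m] (e : m → ℝ) (β : ℝ) (i : m) :
    log (boltzmann e β i) = -β * e i - log (partitionFn e β) := by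
  rw [boltzmann, log_div (exp_pos _).ne' (partitionFn_pos e β).ne', log_exp]

lemma negMulLog_add_mul_log_le {x y : ℝ} (hx : 0 ≤ x) (hy : 0 < y) :
    negMulLog x + x * log y ≤ y - x := by
  rcases hx.eq_or_lt with rfl | hx
  · simpa using hy.le
  have h := mul_le_mul_of_nonneg_left (log_le_sub_one_of_pos (div_pos hy hx)) hx.le
  rw [log_div hy.ne' hx.ne', mul_sub, mul_sub, mul_div_cancel₀ _ hx.ne', mul_one] at h
  rw [negMulLog]
  linarith

lemma sum_negMulLog_le {r : m → ℝ} (hr : 0 ≤ r) (hr1 : ∑ i, r i = 1) (e : m → ℝ) (β : ℝ) :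
    ∑ i, negMulLog (r i) ≤ β * ∑ i, e i * r i + log (partitionFn e β) := by
  have : Nonempty m := by
    by_contra h
    simp [not_nonempty_iff.mp h] at hr1
  have hpt : ∀ i, negMulLog (r i) ≤
      boltzmann e β i - r i + β * (e i * r i) + log (partitionFn e β) * r i := by
    intro i
    have := negMulLog_add_mul_log_le (hr i) (boltzmann_pos e β i)
    rw [log_boltzmann] at this
    linarith
  calc ∑ i, negMulLog (r i)
      ≤ ∑ i, (boltzmann e β i - r i + β * (e i * r i) + log (partitionFn e β) * r i) :=
        Finset.sum_le_sum fun i _ => hpt i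
    _ = β * ∑ i, e i * r i + log (partitionFn e β) := by
        simp only [Finset.sum_add_distrib, Finset.sum_sub_distrib, ← Finset.mul_sum,
          sum_boltzmann, hr1]
        ring

lemma sum_negMulLog_boltzmann [Nonempty m] (e : m → ℝ) (β : ℝ) :
    ∑ i, negMulLog (boltzmann e β i) =
      β * ∑ i, e i * boltzmann e β i + log (partitionFn e β) := by
  have hpt : ∀ i, negMulLog (boltzmann e β i) =
      β * (e i * boltzmann e β i) + log (partitionFn e β) * boltzmann e β i := fun i => by
    rw [negMulLog, log_boltzmann]
    ring
  simp only [hpt, Finset.sum_add_distrib, ← Finset.mul_sum, sum_boltzmann, mul_one]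

lemma sum_negMulLog_le_sum_negMulLog_mulVec [DecidableEq m] {P : Matrix m m ℝ}
    (hP : P ∈ doublyStochastic ℝ m) {x : m → ℝ} (hx : 0 ≤ x) :
    ∑ j, negMulLog (x j) ≤ ∑ i, negMulLog ((P *ᵥ x) i) := by
  calc ∑ j, negMulLog (x j) = ∑ i, ∑ j, P i j • negMulLog (x j) := by
        rw [Finset.sum_comm]
        simp only [smul_eq_mul, ← Finset.sum_mul, sum_col_of_mem_doublyStochastic hP, one_mul]
    _ ≤ ∑ i, negMulLog (∑ j, P i j • x j) := Finset.sum_le_sum fun i _ =>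
        concaveOn_negMulLog.le_map_sum (fun j _ => nonneg_of_mem_doublyStochastic hP)
          (sum_row_of_mem_doublyStochastic hP i) fun j _ => Set.mem_Ici.mpr (hx j)
    _ = ∑ i, negMulLog ((P *ᵥ x) i) := by simp [mulVec, dotProduct]

lemma partitionFn_add {m' : Type*} [Fintype m'] (e : m → ℝ) (e' : m' → ℝ) (β : ℝ) :
    partitionFn (fun p : m × m' => e p.1 + e' p.2) β = partitionFn e β * partitionFn e' β := by
  simp only [partitionFn, Finset.sum_mul_sum, ← exp_add, Fintype.sum_prod_type, mul_add]

lemma boltzmann_add {m' : Type*} [Fintype m'] (e : m → ℝ) (e' : m' → ℝ) (β : ℝ) (p : m × m') :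
    boltzmann (fun p : m × m' => e p.1 + e' p.2) β p =
      boltzmann e β p.1 * boltzmann e' β p.2 := by
  rw [boltzmann, boltzmann, boltzmann, partitionFn_add, mul_add, exp_add, mul_div_mul_comm]

end Classical

open Unitary

section Spectral

variable {m : Type*} [Fintype m] [DecidableEq m]

def conjDiagonal (U : unitaryGroup m ℂ) (d : m → ℝ) : Matrix m m ℂ :=
  conjStarAlgAut ℂ _ U (diagonal fun i => (d i : ℂ))

lemma Matrix.IsHermitian.eq_conjDiagonal {A : Matrix m m ℂ} (hA : A.IsHermitian) :
    A = conjDiagonal hA.eigenvectorUnitary hA.eigenvalues :=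
  hA.spectral_theorem

lemma conjDiagonal_apply (U : unitaryGroup m ℂ) (d : m → ℝ) :
    conjDiagonal U d =
      (U : Matrix m m ℂ) * diagonal (fun i => (d i : ℂ)) * star (U : Matrix m m ℂ) :=
  rfl

lemma conjDiagonal_add (U : unitaryGroup m ℂ) (a b : m → ℝ) :
    conjDiagonal U a + conjDiagonal U b = conjDiagonal U (a + b) := by
  simp only [conjDiagonal, ← map_add, diagonal_add, Pi.add_apply, Complex.ofReal_add]

lemma real_smul_conjDiagonal (U : unitaryGroup m ℂ) (c : ℝ) (d : m → ℝ) :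
    (c : ℂ) • conjDiagonal U d = conjDiagonal U (c • d) := by
  rw [conjDiagonal, conjDiagonal, ← map_smul, ← diagonal_smul]
  congr 2
  funext i
  simp

lemma conjDiagonal_one (U : unitaryGroup m ℂ) : conjDiagonal U 1 = 1 := by
  simp [conjDiagonal]

lemma star_mul_conjDiagonal_mul (U : unitaryGroup m ℂ) (d : m → ℝ) :
    star (U : Matrix m m ℂ) * conjDiagonal U d * U = diagonal fun i => (d i : ℂ) := by
  simp only [conjDiagonal_apply, mul_assoc, Unitary.coe_star_mul_self, mul_one]
  rw [← mul_assoc, Unitary.coe_star_mul_self, one_mul]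

lemma isHermitian_conjDiagonal (U : unitaryGroup m ℂ) (d : m → ℝ) :
    (conjDiagonal U d).IsHermitian :=
  ((isHermitian_diagonal_of_self_adjoint _ (by ext; simp)).isSelfAdjoint.map _ : IsSelfAdjoint _)

lemma posSemidef_conjDiagonal (U : unitaryGroup m ℂ) {d : m → ℝ} (hd : 0 ≤ d) :
    (conjDiagonal U d).PosSemidef := by
  rw [conjDiagonal_apply, star_eq_conjTranspose]
  exact (posSemidef_diagonal_iff.mpr fun i =>
    Complex.zero_le_real.mpr (hd i)).mul_mul_conjTranspose_same _

lemma trace_conjDiagonal (U : unitaryGroup m ℂ) (d : m → ℝ) :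
    (conjDiagonal U d).trace = ((∑ i, d i : ℝ) : ℂ) := by
  rw [conjDiagonal_apply, trace_mul_cycle, Unitary.coe_star_mul_self, one_mul, trace_diagonal]
  push_cast
  rfl

lemma charpoly_conjDiagonal (U : unitaryGroup m ℂ) (d : m → ℝ) :
    (conjDiagonal U d).charpoly = (diagonal fun i => (d i : ℂ)).charpoly := by
  rw [conjDiagonal_apply, charpoly_mul_comm, ← mul_assoc, Unitary.coe_star_mul_self, one_mul]

lemma eigenvalues_conjDiagonal (U : unitaryGroup m ℂ) (d : m → ℝ) :
    Finset.univ.val.map (isHermitian_conjDiagonal U d).eigenvalues = Finset.univ.val.map d := by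
  have h := (isHermitian_conjDiagonal U d).roots_charpoly_eq_eigenvalues
  rw [charpoly_conjDiagonal, charpoly_diagonal, Polynomial.roots_prod _ _
    (Finset.prod_ne_zero_iff.mpr fun i _ => Polynomial.X_sub_C_ne_zero _)] at h
  simpa [Multiset.map_map, Function.comp_def] using (congrArg (Multiset.map Complex.re) h).symm

lemma sum_comp_eigenvalues_conjDiagonal (U : unitaryGroup m ℂ) (d : m → ℝ) (f : ℝ → ℝ) :
    ∑ i, f ((isHermitian_conjDiagonal U d).eigenvalues i) = ∑ i, f (d i) := by
  calc ∑ i, f ((isHermitian_conjDiagonal U d).eigenvalues i)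
      = ((Finset.univ.val.map (isHermitian_conjDiagonal U d).eigenvalues).map f).sum := by
        rw [Multiset.map_map]; rfl
    _ = ((Finset.univ.val.map d).map f).sum := by rw [eigenvalues_conjDiagonal]
    _ = ∑ i, f (d i) := by rw [Multiset.map_map]; rfl

lemma vnEntropy_conjDiagonal (U : unitaryGroup m ℂ) (d : m → ℝ) :
    vnEntropy (conjDiagonal U d) = ∑ i, negMulLog (d i) := by
  rw [vnEntropy, dif_pos (isHermitian_conjDiagonal U d), sum_comp_eigenvalues_conjDiagonal]

end Spectral

section Populations

variable {m : Type*} [Fintype m] [DecidableEq m]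

def populations (U : unitaryGroup m ℂ) (σ : Matrix m m ℂ) (i : m) : ℝ :=
  ((star (U : Matrix m m ℂ) * σ * U) i i).re

lemma energy_conjDiagonal (U : unitaryGroup m ℂ) (e : m → ℝ) (σ : Matrix m m ℂ) :
    energy (conjDiagonal U e) σ = ∑ i, e i * populations U σ i := by
  rw [energy, conjDiagonal_apply, mul_assoc, mul_assoc, trace_mul_comm, mul_assoc]
  simp [trace, populations, diagonal_mul, Complex.re_sum, mul_assoc]

lemma populations_conjDiagonal (U : unitaryGroup m ℂ) (d : m → ℝ) :
    populations U (conjDiagonal U d) = d := by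
  funext i
  simp [populations, star_mul_conjDiagonal_mul]

lemma sum_populations (U : unitaryGroup m ℂ) (σ : Matrix m m ℂ) :
    ∑ i, populations U σ i = σ.trace.re := by
  calc ∑ i, populations U σ i = (star (U : Matrix m m ℂ) * σ * U).trace.re := by
        simp [populations, trace, Complex.re_sum]
    _ = σ.trace.re := by rw [trace_mul_cycle, mem_unitaryGroup_iff.mp U.2, one_mul]

lemma populations_nonneg (U : unitaryGroup m ℂ) {σ : Matrix m m ℂ} (hσ : σ.PosSemidef) :
    0 ≤ populations U σ := fun i => by
  have := (hσ.conjTranspose_mul_mul_same (U : Matrix m m ℂ)).diag_nonneg (i := i)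
  exact (Complex.nonneg_iff.mp this).1

lemma sum_normSq_apply_of_mem_unitaryGroup {W : Matrix m m ℂ} (hW : W ∈ unitaryGroup m ℂ)
    (i : m) : ∑ j, Complex.normSq (W i j) = 1 := by
  have h := congrFun (congrFun (mem_unitaryGroup_iff.mp hW) i) i
  simp only [mul_apply, star_apply, Complex.star_def, Complex.mul_conj, one_apply_eq] at h
  exact_mod_cast h

lemma normSq_mem_doublyStochastic {W : Matrix m m ℂ} (hW : W ∈ unitaryGroup m ℂ) :
    (of fun i j => Complex.normSq (W i j)) ∈ doublyStochastic ℝ m := by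
  refine mem_doublyStochastic_iff_sum.mpr ⟨fun i j => Complex.normSq_nonneg _,
    sum_normSq_apply_of_mem_unitaryGroup hW, fun j => ?_⟩
  simpa [star_apply] using sum_normSq_apply_of_mem_unitaryGroup (Unitary.star_mem hW) j

lemma re_mul_diagonal_mul_star_apply (W : Matrix m m ℂ) (d : m → ℝ) (i : m) :
    ((W * diagonal (fun j => (d j : ℂ)) * star W) i i).re =
      ∑ j, Complex.normSq (W i j) * d j := by
  rw [mul_apply]
  simp only [mul_diagonal, star_apply, Complex.re_sum]
  refine Finset.sum_congr rfl fun j _ => ?_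
  rw [mul_right_comm, Complex.star_def, Complex.mul_conj, ← Complex.ofReal_mul, Complex.ofReal_re]

lemma populations_conjDiagonal_eq_mulVec (U V : unitaryGroup m ℂ) (d : m → ℝ) :
    populations U (conjDiagonal V d) =
      (of fun i j =>
        Complex.normSq (((star U * V : unitaryGroup m ℂ) : Matrix m m ℂ) i j)) *ᵥ d := by
  funext i
  set W : Matrix m m ℂ := ((star U * V : unitaryGroup m ℂ) : Matrix m m ℂ)
  have hconj : star (U : Matrix m m ℂ) * conjDiagonal V d * U =
      W * diagonal (fun j => (d j : ℂ)) * star W := by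
    simp only [W, conjDiagonal_apply, Submonoid.coe_mul, Unitary.coe_star, star_mul, star_star,
      mul_assoc]
  rw [populations, hconj, re_mul_diagonal_mul_star_apply]
  simp [mulVec, dotProduct]

lemma vnEntropy_le_sum_negMulLog_populations (U : unitaryGroup m ℂ) {σ : Matrix m m ℂ}
    (hσ : σ.PosSemidef) :
    vnEntropy σ ≤ ∑ i, negMulLog (populations U σ i) := by
  obtain ⟨V, d, hd, rfl⟩ : ∃ V d, 0 ≤ d ∧ σ = conjDiagonal V d :=
    ⟨_, _, hσ.eigenvalues_nonneg, hσ.isHermitian.eq_conjDiagonal⟩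
  rw [vnEntropy_conjDiagonal, populations_conjDiagonal_eq_mulVec]
  exact sum_negMulLog_le_sum_negMulLog_mulVec (normSq_mem_doublyStochastic (star U * V).2) hd

end Populations

lemma nonempty_of_trace_eq_one {m : Type*} [Fintype m] {ρ : Matrix m m ℂ} (hρ : ρ.trace = 1) :
    Nonempty m := by
  by_contra h
  simp [trace, not_nonempty_iff.mp h] at hρ

section Gibbs

variable {m : Type*} [Fintype m] [DecidableEq m]

lemma Matrix.IsHermitian.exists_eq_conjDiagonal {A : Matrix m m ℂ} (hA : A.IsHermitian) :
    ∃ U d, A = conjDiagonal U d :=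
  ⟨_, _, hA.eq_conjDiagonal⟩

lemma exp_conjDiagonal (U : unitaryGroup m ℂ) (d : m → ℝ) :
    NormedSpace.exp (conjDiagonal U d) = conjDiagonal U fun i => exp (d i) := by
  have h : NormedSpace.exp
      ((U : Matrix m m ℂ) * diagonal (fun i => (d i : ℂ)) * star (U : Matrix m m ℂ)) =
        U * NormedSpace.exp (diagonal fun i => (d i : ℂ)) * star (U : Matrix m m ℂ) :=
    Matrix.exp_units_conj (Unitary.toUnits U) _
  rw [conjDiagonal_apply, conjDiagonal_apply, h, exp_diagonal]
  congr 3
  funext i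
  rw [Pi.exp_def, ← Complex.exp_eq_exp_ℂ, Complex.ofReal_exp]

lemma gibbs_conjDiagonal (U : unitaryGroup m ℂ) (e : m → ℝ) (β : ℝ) :
    gibbs (conjDiagonal U e) β = conjDiagonal U (boltzmann e β) := by
  have hexp : NormedSpace.exp (-(β : ℂ) • conjDiagonal U e) =
      conjDiagonal U fun i => exp (-β * e i) := by
    rw [← Complex.ofReal_neg, real_smul_conjDiagonal, exp_conjDiagonal]
    rfl
  rw [gibbs, hexp, trace_conjDiagonal, ← Complex.ofReal_inv, real_smul_conjDiagonal]
  congr 1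
  funext i
  simp [boltzmann, partitionFn, div_eq_inv_mul]

lemma isDensity_gibbs [Nonempty m] {H : Matrix m m ℂ} (hH : H.IsHermitian) (β : ℝ) :
    IsDensity (gibbs H β) := by
  obtain ⟨U, e, rfl⟩ := hH.exists_eq_conjDiagonal
  rw [gibbs_conjDiagonal]
  exact ⟨posSemidef_conjDiagonal U (boltzmann_nonneg e β),
    by rw [trace_conjDiagonal, sum_boltzmann, Complex.ofReal_one]⟩

theorem vnEntropy_le_mul_energy_add_log_partitionFn (U : unitaryGroup m ℂ) (e : m → ℝ)
    {σ : Matrix m m ℂ} (hσ : IsDensity σ) (β : ℝ) :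
    vnEntropy σ ≤ β * energy (conjDiagonal U e) σ + log (partitionFn e β) := by
  have hpop1 : ∑ i, populations U σ i = 1 := by rw [sum_populations, hσ.2, Complex.one_re]
  calc vnEntropy σ ≤ ∑ i, negMulLog (populations U σ i) :=
        vnEntropy_le_sum_negMulLog_populations U hσ.1
    _ ≤ β * ∑ i, e i * populations U σ i + log (partitionFn e β) :=
        sum_negMulLog_le (populations_nonneg U hσ.1) hpop1 e β
    _ = β * energy (conjDiagonal U e) σ + log (partitionFn e β) := by rw [energy_conjDiagonal]

theorem vnEntropy_gibbs_conjDiagonal [Nonempty m] (U : unitaryGroup m ℂ) (e : m → ℝ) (β : ℝ) :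
    vnEntropy (gibbs (conjDiagonal U e) β) =
      β * energy (conjDiagonal U e) (gibbs (conjDiagonal U e) β) + log (partitionFn e β) := by
  rw [gibbs_conjDiagonal, vnEntropy_conjDiagonal, energy_conjDiagonal, populations_conjDiagonal,
    sum_negMulLog_boltzmann]

/-- The paper's `F_β`; `freeEnergy` above is a different quantity (energy minus bound energy). -/
def thermalFreeEnergy (β : ℝ) (H ρ : Matrix m m ℂ) : ℝ := energy H ρ - β⁻¹ * vnEntropy ρ

theorem thermalFreeEnergy_gibbs_le {H : Matrix m m ℂ} (hH : H.IsHermitian) {β : ℝ} (hβ : 0 < β)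
    {σ : Matrix m m ℂ} (hσ : IsDensity σ) :
    thermalFreeEnergy β H (gibbs H β) ≤ thermalFreeEnergy β H σ := by
  have : Nonempty m := nonempty_of_trace_eq_one hσ.2
  obtain ⟨U, e, rfl⟩ := hH.exists_eq_conjDiagonal
  have hklein := mul_le_mul_of_nonneg_left
    (vnEntropy_le_mul_energy_add_log_partitionFn U e hσ β) (inv_nonneg.mpr hβ.le)
  rw [thermalFreeEnergy, thermalFreeEnergy, vnEntropy_gibbs_conjDiagonal]
  rw [mul_add, ← mul_assoc, inv_mul_cancel₀ hβ.ne', one_mul] at hklein ⊢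
  linarith

end Gibbs

section Kronecker

open Kronecker

variable {a b : Type*} [Fintype a] [DecidableEq a] [Fintype b] [DecidableEq b]

def kroneckerUnitary (U : unitaryGroup a ℂ) (V : unitaryGroup b ℂ) : unitaryGroup (a × b) ℂ :=
  ⟨(U : Matrix a a ℂ) ⊗ₖ (V : Matrix b b ℂ), kronecker_mem_unitary U.2 V.2⟩

lemma conjDiagonal_kronecker (U : unitaryGroup a ℂ) (V : unitaryGroup b ℂ) (d : a → ℝ)
    (d' : b → ℝ) :
    conjDiagonal U d ⊗ₖ conjDiagonal V d' =
      conjDiagonal (kroneckerUnitary U V) fun p => d p.1 * d' p.2 := by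
  simp only [conjDiagonal_apply, kroneckerUnitary, star_eq_conjTranspose, conjTranspose_kronecker,
    mul_kronecker_mul, diagonal_kronecker_diagonal, Complex.ofReal_mul]

lemma kroneckerSum_conjDiagonal (U : unitaryGroup a ℂ) (V : unitaryGroup b ℂ) (d : a → ℝ)
    (d' : b → ℝ) :
    conjDiagonal U d ⊗ₖ (1 : Matrix b b ℂ) + (1 : Matrix a a ℂ) ⊗ₖ conjDiagonal V d' =
      conjDiagonal (kroneckerUnitary U V) fun p => d p.1 + d' p.2 := by
  rw [← conjDiagonal_one U, ← conjDiagonal_one V, conjDiagonal_kronecker, conjDiagonal_kronecker,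
    conjDiagonal_add]
  congr 1
  funext p
  simp

lemma Matrix.IsHermitian.kroneckerSum {A : Matrix a a ℂ} {B : Matrix b b ℂ} (hA : A.IsHermitian)
    (hB : B.IsHermitian) : (A ⊗ₖ (1 : Matrix b b ℂ) + (1 : Matrix a a ℂ) ⊗ₖ B).IsHermitian := by
  obtain ⟨U, d, rfl⟩ := hA.exists_eq_conjDiagonal
  obtain ⟨V, d', rfl⟩ := hB.exists_eq_conjDiagonal
  rw [kroneckerSum_conjDiagonal]
  exact isHermitian_conjDiagonal _ _

lemma vnEntropy_kronecker_s14 {ρ : Matrix a a ℂ} {σ : Matrix b b ℂ} (hρ : ρ.IsHermitian)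
    (hσ : σ.IsHermitian) (hρ1 : ρ.trace = 1) (hσ1 : σ.trace = 1) :
    vnEntropy (ρ ⊗ₖ σ) = vnEntropy ρ + vnEntropy σ := by
  obtain ⟨U, d, rfl⟩ := hρ.exists_eq_conjDiagonal
  obtain ⟨V, d', rfl⟩ := hσ.exists_eq_conjDiagonal
  have hd : ∑ i, d i = 1 := by exact_mod_cast (trace_conjDiagonal U d).symm.trans hρ1
  have hd' : ∑ j, d' j = 1 := by exact_mod_cast (trace_conjDiagonal V d').symm.trans hσ1
  rw [conjDiagonal_kronecker, vnEntropy_conjDiagonal, vnEntropy_conjDiagonal,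
    vnEntropy_conjDiagonal, Fintype.sum_prod_type]
  simp only [negMulLog_mul, Finset.sum_add_distrib, ← Finset.mul_sum, ← Finset.sum_mul, hd, hd',
    one_mul]

lemma energy_kroneckerSum (HA ρ : Matrix a a ℂ) (HB σ : Matrix b b ℂ) (hρ1 : ρ.trace = 1)
    (hσ1 : σ.trace = 1) :
    energy (HA ⊗ₖ (1 : Matrix b b ℂ) + (1 : Matrix a a ℂ) ⊗ₖ HB) (ρ ⊗ₖ σ) =
      energy HA ρ + energy HB σ := by
  rw [energy, add_mul, ← mul_kronecker_mul, ← mul_kronecker_mul, trace_add, trace_kronecker,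
    trace_kronecker, one_mul, one_mul, hρ1, hσ1, mul_one, one_mul, Complex.add_re]
  rfl

lemma thermalFreeEnergy_kronecker (β : ℝ) (HA : Matrix a a ℂ) (HB : Matrix b b ℂ)
    {ρ : Matrix a a ℂ} {σ : Matrix b b ℂ} (hρ : ρ.IsHermitian) (hσ : σ.IsHermitian)
    (hρ1 : ρ.trace = 1) (hσ1 : σ.trace = 1) :
    thermalFreeEnergy β (HA ⊗ₖ (1 : Matrix b b ℂ) + (1 : Matrix a a ℂ) ⊗ₖ HB) (ρ ⊗ₖ σ) =
      thermalFreeEnergy β HA ρ + thermalFreeEnergy β HB σ := by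
  rw [thermalFreeEnergy, thermalFreeEnergy, thermalFreeEnergy,
    energy_kroneckerSum _ _ _ _ hρ1 hσ1, vnEntropy_kronecker_s14 hρ hσ hρ1 hσ1]
  ring

lemma gibbs_kroneckerSum {HA : Matrix a a ℂ} {HB : Matrix b b ℂ} (hA : HA.IsHermitian)
    (hB : HB.IsHermitian) (β : ℝ) :
    gibbs (HA ⊗ₖ (1 : Matrix b b ℂ) + (1 : Matrix a a ℂ) ⊗ₖ HB) β =
      gibbs HA β ⊗ₖ gibbs HB β := by
  obtain ⟨U, d, rfl⟩ := hA.exists_eq_conjDiagonal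
  obtain ⟨V, d', rfl⟩ := hB.exists_eq_conjDiagonal
  rw [kroneckerSum_conjDiagonal, gibbs_conjDiagonal, gibbs_conjDiagonal, gibbs_conjDiagonal,
    conjDiagonal_kronecker]
  congr 1
  funext p
  exact boltzmann_add d d' β p

end Kronecker

open Kronecker in
/-- Work extraction with a thermal bath:
W ≤ F_β(ρ_A) - F_β(γ_A(β)) for any entropy preserving transformation of
ρ_A ⊗ γ_B(β), where F_β(σ) = E(σ) - β⁻¹ S(σ). -/
theorem work_extraction_with_bath {dA dB : ℕ}
    (HA : Matrix (Fin dA) (Fin dA) ℂ) (HB : Matrix (Fin dB) (Fin dB) ℂ)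
    (hA : HA.IsHermitian) (hB : HB.IsHermitian)
    (β : ℝ) (hβ : 0 < β)
    (ρA : Matrix (Fin dA) (Fin dA) ℂ) (hρA : IsDensity ρA)
    (ρ' : Matrix (Fin dA × Fin dB) (Fin dA × Fin dB) ℂ) (hρ' : IsDensity ρ')
    (hiso : vnEntropy ρ' = vnEntropy (ρA ⊗ₖ gibbs HB β)) :
    energy (HA ⊗ₖ (1 : Matrix (Fin dB) (Fin dB) ℂ)
          + (1 : Matrix (Fin dA) (Fin dA) ℂ) ⊗ₖ HB) (ρA ⊗ₖ gibbs HB β)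
      - energy (HA ⊗ₖ (1 : Matrix (Fin dB) (Fin dB) ℂ)
          + (1 : Matrix (Fin dA) (Fin dA) ℂ) ⊗ₖ HB) ρ'
      ≤ (energy HA ρA - β⁻¹ * vnEntropy ρA)
        - (energy HA (gibbs HA β) - β⁻¹ * vnEntropy (gibbs HA β)) := by
  have hne : Nonempty (Fin dA × Fin dB) := nonempty_of_trace_eq_one hρ'.2
  have : Nonempty (Fin dA) := hne.map Prod.fst
  have : Nonempty (Fin dB) := hne.map Prod.snd
  have hγA := isDensity_gibbs hA β
  have hγB := isDensity_gibbs hB β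
  have hmin := thermalFreeEnergy_gibbs_le (hA.kroneckerSum hB) hβ hρ'
  rw [gibbs_kroneckerSum hA hB, thermalFreeEnergy_kronecker β HA HB hγA.1.isHermitian
    hγB.1.isHermitian hγA.2 hγB.2] at hmin
  have hsplit :=
    thermalFreeEnergy_kronecker β HA HB hρA.1.isHermitian hγB.1.isHermitian hρA.2 hγB.2
  simp only [thermalFreeEnergy, hiso] at hmin hsplit
  linarith
end
end
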